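/- Fix K > 1 and a smooth function φ:[0,∞)→[0,1] with 𝟙_{[0,K]} ≤ φ ≤ 𝟙_{[0,2K]} and |φ′| ≤ 𝟙_{[0,2K]}. There exists a constant C < ∞, depending only on K and φ, such that for all W ≥ 1, all A ∈ Mat_W(ℂ), all Hermitian W×W matrices G, G̃, and all real z with |z| ≤ √W: ‖A‖_HS · ‖Q_A‖_HS ≤ C·W, where, writing γ := φ(‖G‖²_HS/W²)·φ(‖G̃‖²_HS/W²), f(A) := ‖A‖²_HS and g(A) := ‖G + z·1 + A·G̃·A*‖²_HS, Q_A := γ·φ′(f(A)/W)·φ(g(A)/W²)·(2/W)·A + γ·φ(f(A)/W)·φ′(g(A)/W²)·(4/W²)·( (G + z·1)·A·G̃ + A·G̃·A*·A·G̃ ). -/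

import Mathlib

/-!
Every term of `Q_A` carries cutoff factors that vanish unless `‖A‖²_HS ≤ 2KW`,
`‖G̃‖²_HS ≤ 2KW²` and `‖G + z + A G̃ A*‖²_HS ≤ 2KW²`, and the remaining factors have modulus
at most one. Since the second bracket factors as `(G + z + A G̃ A*) A G̃`, submultiplicativity
of the Hilbert–Schmidt norm bounds `‖A‖ ‖Q_A‖` by `(2/W) · 2KW + (4/W²) · 2KW · (2K)^{1/2}W ·
(2K)^{1/2}W = 4K + 16K²W`.
-/

open Matrix

noncomputable section

namespace RBM

abbrev Mat (W : ℕ) := Matrix (Fin W) (Fin W) ℂ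

/-- Squared Hilbert–Schmidt norm `‖M‖²_HS = tr(M*M)`. -/
def hsSq {W : ℕ} (M : Mat W) : ℝ := (Matrix.trace (Mᴴ * M)).re

open Set

def AbsLeIndicatorIcc (R : ℝ) (f : ℝ → ℝ) : Prop :=
  ∀ x, 0 ≤ x → |f x| ≤ (Icc 0 R).indicator (fun _ => 1) x

section Cutoff

variable {f : ℝ → ℝ} {R : ℝ}

lemma abs_le_one_of_abs_le_indicator {x : ℝ}
    (hf : |f x| ≤ (Icc 0 R).indicator (fun _ => 1) x) : |f x| ≤ 1 :=
  hf.trans (indicator_apply_le' (fun _ => le_rfl) (fun _ => zero_le_one))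

lemma abs_mul_le_of_abs_le_indicator {x P B : ℝ}
    (hf : |f x| ≤ (Icc 0 R).indicator (fun _ => 1) x) (hP : 0 ≤ P) (hB : 0 ≤ B)
    (hPB : x ≤ R → P ≤ B) : |f x| * P ≤ B := by
  by_cases hx : x ∈ Icc 0 R
  · calc |f x| * P ≤ 1 * P := by gcongr; exact abs_le_one_of_abs_le_indicator hf
      _ ≤ B := by rw [one_mul]; exact hPB hx.2
  · rw [indicator_of_notMem hx] at hf
    rw [le_antisymm hf (abs_nonneg _), zero_mul]
    exact hB

lemma AbsLeIndicatorIcc.abs_mul_le_mul (hf : AbsLeIndicatorIcc R f) (hR : 0 ≤ R)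
    {s y : ℝ} (hs : 0 < s) (hy : 0 ≤ y) : |f (y / s)| * y ≤ R * s :=
  abs_mul_le_of_abs_le_indicator (hf _ (by positivity)) hy (by positivity)
    (div_le_iff₀ hs).mp

lemma AbsLeIndicatorIcc.abs_mul_le_sqrt_mul (hf : AbsLeIndicatorIcc R f)
    {s y : ℝ} (hs : 0 < s) (hy : 0 ≤ y) : |f (y ^ 2 / s ^ 2)| * y ≤ √R * s :=
  abs_mul_le_of_abs_le_indicator (hf _ (by positivity)) hy (by positivity) fun h => by
    rw [div_le_iff₀ (by positivity)] at h
    calc y = √(y ^ 2) := (Real.sqrt_sq hy).symm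
      _ ≤ √(R * s ^ 2) := Real.sqrt_le_sqrt h
      _ = √R * s := by rw [Real.sqrt_mul' _ (sq_nonneg s), Real.sqrt_sq hs.le]

end Cutoff

lemma norm_mul_norm_smul_add_smul_mul_le {E : Type*} [SeminormedRing E] [NormedSpace ℝ E]
    (a b : ℝ) (A M T : E) :
    ‖A‖ * ‖a • A + b • (M * A * T)‖ ≤ |a| * ‖A‖ ^ 2 + |b| * (‖A‖ ^ 2 * ‖M‖ * ‖T‖) := by
  have hMAT : ‖M * A * T‖ ≤ ‖M‖ * ‖A‖ * ‖T‖ :=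
    (norm_mul_le _ _).trans (by gcongr; exact norm_mul_le _ _)
  calc ‖A‖ * ‖a • A + b • (M * A * T)‖
      ≤ ‖A‖ * (|a| * ‖A‖ + |b| * (‖M‖ * ‖A‖ * ‖T‖)) := by
        gcongr
        refine (norm_add_le _ _).trans ?_
        rw [norm_smul, norm_smul, Real.norm_eq_abs, Real.norm_eq_abs]
        gcongr
    _ = |a| * ‖A‖ ^ 2 + |b| * (‖A‖ ^ 2 * ‖M‖ * ‖T‖) := by ring

lemma norm_mul_norm_cutoff_smul_add_cutoff_smul_le {E : Type*} [SeminormedRing E]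
    [NormedSpace ℝ E] {φ ψ : ℝ → ℝ} {R w : ℝ}
    (hφ : AbsLeIndicatorIcc R φ) (hψ : AbsLeIndicatorIcc R ψ) (hR : 0 ≤ R)
    (hw : 0 < w) (G T A M : E) :
    ‖A‖ * ‖(φ (‖G‖ ^ 2 / w ^ 2) * φ (‖T‖ ^ 2 / w ^ 2) * ψ (‖A‖ ^ 2 / w) *
          φ (‖M‖ ^ 2 / w ^ 2) * (2 / w)) • A +
        (φ (‖G‖ ^ 2 / w ^ 2) * φ (‖T‖ ^ 2 / w ^ 2) * φ (‖A‖ ^ 2 / w) *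
          ψ (‖M‖ ^ 2 / w ^ 2) * (4 / w ^ 2)) • (M * A * T)‖ ≤ 2 * R + 4 * R ^ 2 * w := by
  have hφ1 x (hx : 0 ≤ x) : |φ x| ≤ 1 := abs_le_one_of_abs_le_indicator (hφ x hx)
  have hψA : |ψ (‖A‖ ^ 2 / w)| * ‖A‖ ^ 2 ≤ R * w :=
    hψ.abs_mul_le_mul hR hw (sq_nonneg _)
  have hφA : |φ (‖A‖ ^ 2 / w)| * ‖A‖ ^ 2 ≤ R * w :=
    hφ.abs_mul_le_mul hR hw (sq_nonneg _)
  have hψM : |ψ (‖M‖ ^ 2 / w ^ 2)| * ‖M‖ ≤ √R * w :=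
    hψ.abs_mul_le_sqrt_mul hw (norm_nonneg _)
  have hφT : |φ (‖T‖ ^ 2 / w ^ 2)| * ‖T‖ ≤ √R * w :=
    hφ.abs_mul_le_sqrt_mul hw (norm_nonneg _)
  have hφG := hφ1 (‖G‖ ^ 2 / w ^ 2) (by positivity)
  have hφM := hφ1 (‖M‖ ^ 2 / w ^ 2) (by positivity)
  have hφT1 := hφ1 (‖T‖ ^ 2 / w ^ 2) (by positivity)
  refine (norm_mul_norm_smul_add_smul_mul_le _ _ _ _ _).trans ?_
  simp only [abs_mul, abs_of_pos (by positivity : (0 : ℝ) < 2 / w),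
    abs_of_pos (by positivity : (0 : ℝ) < 4 / w ^ 2)]
  calc _ = |φ (‖G‖ ^ 2 / w ^ 2)| * |φ (‖T‖ ^ 2 / w ^ 2)| * |φ (‖M‖ ^ 2 / w ^ 2)| * (2 / w) *
          (|ψ (‖A‖ ^ 2 / w)| * ‖A‖ ^ 2) +
        |φ (‖G‖ ^ 2 / w ^ 2)| * (4 / w ^ 2) * (|φ (‖A‖ ^ 2 / w)| * ‖A‖ ^ 2) *
          (|ψ (‖M‖ ^ 2 / w ^ 2)| * ‖M‖) * (|φ (‖T‖ ^ 2 / w ^ 2)| * ‖T‖) := by ring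
    _ ≤ 1 * 1 * 1 * (2 / w) * (R * w) +
        1 * (4 / w ^ 2) * (R * w) * (√R * w) * (√R * w) := by gcongr
    _ = 2 * R + 4 * R ^ 2 * w := by
      field_simp
      rw [Real.sq_sqrt hR]
      ring

attribute [local instance] Matrix.frobeniusNormedAddCommGroup Matrix.frobeniusNormedSpace
  Matrix.frobeniusNormedRing

lemma hsSq_eq_norm_sq {W : ℕ} (M : Mat W) : hsSq M = ‖M‖ ^ 2 := by
  rw [frobenius_norm_def, ← Real.rpow_natCast, ← Real.rpow_mul (by positivity)]
  simpa [hsSq, trace, mul_apply, Complex.re_sum, Complex.mul_re, ← Complex.normSq_eq_norm_sq,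
    Complex.normSq_apply] using Finset.sum_comm

lemma sqrt_hsSq {W : ℕ} (M : Mat W) : √(hsSq M) = ‖M‖ := by
  rw [hsSq_eq_norm_sq, Real.sqrt_sq (norm_nonneg M)]

theorem QA_hilbert_schmidt_bound_general (K : ℝ) (hK : 1 < K) (φ : ℝ → ℝ)
    (hφ01 : ∀ x, 0 ≤ x → 0 ≤ φ x ∧ φ x ≤ 1)
    (hupp : ∀ x, 0 ≤ x → φ x ≤ Set.indicator (Set.Icc (0:ℝ) (2 * K)) (fun _ => 1) x)
    (hderiv : ∀ x, 0 ≤ x →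
      |deriv φ x| ≤ Set.indicator (Set.Icc (0:ℝ) (2 * K)) (fun _ => 1) x) :
    ∃ C : ℝ, ∀ W : ℕ, 1 ≤ W → ∀ G Gt : Mat W, G.IsHermitian → Gt.IsHermitian →
    ∀ z : ℝ, |z| ≤ Real.sqrt W → ∀ A : Mat W,
      Real.sqrt (hsSq A) *
        Real.sqrt (hsSq
          (((φ (hsSq G / (W : ℝ) ^ 2) * φ (hsSq Gt / (W : ℝ) ^ 2)) *
              deriv φ (hsSq A / (W : ℝ)) *
              φ (hsSq (G + (z : ℂ) • 1 + A * Gt * Aᴴ) / (W : ℝ) ^ 2) *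
              (2 / (W : ℝ))) • A +
           ((φ (hsSq G / (W : ℝ) ^ 2) * φ (hsSq Gt / (W : ℝ) ^ 2)) *
              φ (hsSq A / (W : ℝ)) *
              deriv φ (hsSq (G + (z : ℂ) • 1 + A * Gt * Aᴴ) / (W : ℝ) ^ 2) *
              (4 / (W : ℝ) ^ 2)) •
            ((G + (z : ℂ) • 1) * A * Gt + A * Gt * Aᴴ * A * Gt))) ≤
      C * W := by
  have hφ : AbsLeIndicatorIcc (2 * K) φ := fun x hx => by
    rw [abs_of_nonneg (hφ01 x hx).1]; exact hupp x hx
  have hK0 : 0 ≤ 2 * K := by linarith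
  refine ⟨4 * K + 16 * K ^ 2, fun W hW G Gt _ _ z _ A => ?_⟩
  have hW1 : (1 : ℝ) ≤ W := by exact_mod_cast hW
  set M := G + (z : ℂ) • 1 + A * Gt * Aᴴ
  have hB : (G + (z : ℂ) • 1) * A * Gt + A * Gt * Aᴴ * A * Gt = M * A * Gt := by
    simp only [M, add_mul]
  rw [hB, sqrt_hsSq, sqrt_hsSq]
  simp only [hsSq_eq_norm_sq]
  refine (norm_mul_norm_cutoff_smul_add_cutoff_smul_le hφ hderiv hK0
    (by positivity) G Gt A M).trans ?_
  nlinarith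

theorem QA_hilbert_schmidt_bound (K : ℝ) (hK : 1 < K) (φ : ℝ → ℝ)
    (hφ : ContDiff ℝ (⊤ : ℕ∞) φ)
    (hφ01 : ∀ x, 0 ≤ x → 0 ≤ φ x ∧ φ x ≤ 1)
    (hlow : ∀ x, 0 ≤ x → Set.indicator (Set.Icc (0:ℝ) K) (fun _ => 1) x ≤ φ x)
    (hupp : ∀ x, 0 ≤ x → φ x ≤ Set.indicator (Set.Icc (0:ℝ) (2 * K)) (fun _ => 1) x)
    (hderiv : ∀ x, 0 ≤ x →
      |deriv φ x| ≤ Set.indicator (Set.Icc (0:ℝ) (2 * K)) (fun _ => 1) x) :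
    ∃ C : ℝ, ∀ W : ℕ, 1 ≤ W → ∀ G Gt : Mat W, G.IsHermitian → Gt.IsHermitian →
    ∀ z : ℝ, |z| ≤ Real.sqrt W → ∀ A : Mat W,
      Real.sqrt (hsSq A) *
        Real.sqrt (hsSq
          (((φ (hsSq G / (W : ℝ) ^ 2) * φ (hsSq Gt / (W : ℝ) ^ 2)) *
              deriv φ (hsSq A / (W : ℝ)) *
              φ (hsSq (G + (z : ℂ) • 1 + A * Gt * Aᴴ) / (W : ℝ) ^ 2) *
              (2 / (W : ℝ))) • A +
           ((φ (hsSq G / (W : ℝ) ^ 2) * φ (hsSq Gt / (W : ℝ) ^ 2)) *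
              φ (hsSq A / (W : ℝ)) *
              deriv φ (hsSq (G + (z : ℂ) • 1 + A * Gt * Aᴴ) / (W : ℝ) ^ 2) *
              (4 / (W : ℝ) ^ 2)) •
            ((G + (z : ℂ) • 1) * A * Gt + A * Gt * Aᴴ * A * Gt))) ≤
      C * W :=
  QA_hilbert_schmidt_bound_general K hK φ hφ01 hupp hderiv

end RBM
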